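/- arXiv:2309.04291 — 2 statements merged into one kernel-verified Lean document; each statement's English description precedes it below -/
import Mathlib

section
/- Let p ≥ 2. If a 2p-regular graph G on n vertices is (p+2)-star colourable, then n is divisible by (p+1)(p+2). -/
/-!
Write `d(v, c)` for the number of neighbours of `v` of colour `c`. For an edge `uw` of a star
colouring, `d(u, f w)` and `d(w, f u)` cannot both be at least 2, since that would yield a
bicoloured path on four vertices; so at least one end sees the other as the only neighbour of its
colour. Around a vertex of a `2p`-regular graph the `p + 1` foreign colours share `2p` neighbours,
hence at most `p` of them occur exactly once. Comparing with the number of edges, every vertex has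
exactly `p` colours occurring once and one "heavy" colour occurring `p` times, and every edge is
seen as unique from exactly one of its ends. Call `v` light towards a colour occurring once around
it and heavy towards its heavy colour.

Let `N c` be the size of the colour class `c` and `A a b` the number of vertices of colour `a`
whose heavy colour is `b`. Double counting the edges between the classes `a` and `b` gives
`p * A a b + A b a = N b`, and `∑_{b ≠ a} A a b = N a`. This linear system forces
`n = (p + 2) * N a` for the number `n` of vertices, and `N a = (p + 1) * A a b`.
-/

/-- A star colouring: a proper colouring with no bicoloured 4-vertex path. -/
def IsStarColoring {V : Type*} {α : Type*} (G : SimpleGraph V) (f : V → α) : Prop :=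
  (∀ ⦃u v : V⦄, G.Adj u v → f u ≠ f v) ∧
  ∀ ⦃a b c d : V⦄, G.Adj a b → G.Adj b c → G.Adj c d →
    a ≠ c → a ≠ d → b ≠ d → ¬(f a = f c ∧ f b = f d)

open Finset

namespace Finset

variable {ι : Type*} {s : Finset ι} {g : ι → ℕ}

theorem card_filter_eq_one_lt_card (h : ∑ i ∈ s, g i ≠ #s) : #{i ∈ s | g i = 1} < #s := by
  refine (card_filter_le _ _).lt_of_ne fun hcard => h ?_
  rw [sum_congr rfl (card_filter_eq_iff.1 hcard), sum_const, smul_eq_mul, mul_one]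

theorem sum_add_one_eq_card_add_of_card_filter_ne_one {i : ι} (hi : i ∈ s) (hgi : g i ≠ 1)
    (h : #{j ∈ s | g j ≠ 1} = 1) : ∑ j ∈ s, g j + 1 = #s + g i := by
  obtain ⟨i₀, hi₀⟩ := card_eq_one.1 h
  have hii₀ : i = i₀ := mem_singleton.1 (hi₀ ▸ mem_filter.2 ⟨hi, hgi⟩)
  have hones : ∑ j ∈ s with g j = 1, g j = #{j ∈ s | g j = 1} := by
    rw [card_eq_sum_ones]; exact sum_congr rfl fun j hj => (mem_filter.1 hj).2
  have hcard := card_filter_add_card_filter_not (s := s) (fun j => g j = 1)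
  rw [← sum_filter_add_sum_filter_not s (fun j => g j = 1), hones, hi₀, sum_singleton,
    ← hii₀]
  rw [hi₀, card_singleton] at hcard
  omega

end Finset

theorem add_one_mul_add_two_mul_eq_sum {ι : Type*} [Fintype ι] [DecidableEq ι] {p : ℕ}
    (hp : 1 < p) (hι : Fintype.card ι = p + 2) (N : ι → ℕ) (A : ι → ι → ℕ)
    (hA : ∀ a, ∑ b ∈ univ.erase a, A a b = N a)
    (hAN : ∀ a b, a ≠ b → p * A a b + A b a = N b)
    {a b : ι} (hab : a ≠ b) : (p + 1) * (p + 2) * A a b = ∑ c, N c := by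
  have hN : ∀ a, (p + 2) * N a = ∑ c, N c := by
    intro a
    have hcard : #(univ.erase a) = p + 1 := by simp [hι]
    have hout : p * N a + ∑ c ∈ univ.erase a, A c a = ∑ c ∈ univ.erase a, N c := by
      rw [← hA, mul_sum, ← sum_add_distrib]
      exact sum_congr rfl fun c hc => hAN a c (ne_of_mem_erase hc).symm
    have hin : p * ∑ c ∈ univ.erase a, A c a + N a = (p + 1) * N a := by
      rw [← hA, mul_sum, ← sum_add_distrib, ← hcard, ← smul_eq_mul, ← sum_const, hA]
      exact sum_congr rfl fun c hc => hAN c a (ne_of_mem_erase hc)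
    have hin' : ∑ c ∈ univ.erase a, A c a = N a :=
      Nat.eq_of_mul_eq_mul_left (by omega : 0 < p) (by rw [add_one_mul] at hin; omega)
    rw [← add_sum_erase _ _ (mem_univ a), ← hout, hin']
    ring
  have hNab : N a = N b :=
    Nat.eq_of_mul_eq_mul_left (by omega : 0 < p + 2) ((hN a).trans (hN b).symm)
  have hsym : A a b = A b a := by
    have h₁ := hAN a b hab
    have h₂ := hAN b a hab.symm
    zify at h₁ h₂ hNab
    have : ((p : ℤ) - 1) * ((A a b : ℤ) - A b a) = 0 := by
      linear_combination h₁ - h₂ - hNab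
    have hp1 : (p : ℤ) - 1 ≠ 0 := by omega
    exact_mod_cast sub_eq_zero.1 ((mul_eq_zero.1 this).resolve_left hp1)
  rw [← hN b, ← hAN a b hab, hsym]
  ring

namespace SimpleGraph

section LocallyFinite

variable {V α : Type*} (G : SimpleGraph V) [G.LocallyFinite] [DecidableEq α] (f : V → α)

def colorDegree (v : V) (c : α) : ℕ := #{w ∈ G.neighborFinset v | f w = c}

variable {G f}

theorem sum_colorDegree [Fintype α] (v : V) : ∑ c, G.colorDegree f v c = G.degree v := by
  rw [← card_neighborFinset_eq_degree,
    card_eq_sum_card_fiberwise (f := f) (t := univ) fun _ _ => mem_univ _]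
  rfl

theorem colorDegree_pos {v w : V} (h : G.Adj v w) : 0 < G.colorDegree f v (f w) :=
  card_pos.2 ⟨w, mem_filter.2 ⟨(mem_neighborFinset _ _ _).2 h, rfl⟩⟩

theorem card_filter_colorDegree_eq_one_le [Fintype α] (v : V) :
    #{w ∈ G.neighborFinset v | G.colorDegree f v (f w) = 1} ≤
      #{c | G.colorDegree f v c = 1} := by
  refine card_le_card_of_injOn f (fun w hw => ?_) fun w hw w' hw' hww' => ?_
  · simpa using (mem_filter.1 hw).2
  · simp only [mem_coe, mem_filter] at hw hw'
    exact card_le_one.1 hw.2.le w (mem_filter.2 ⟨hw.1, rfl⟩) w'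
      (mem_filter.2 ⟨hw'.1, hww'.symm⟩)

end LocallyFinite

end SimpleGraph

open SimpleGraph

namespace IsStarColoring

section LocallyFinite

variable {V α : Type*} {G : SimpleGraph V} [G.LocallyFinite] [DecidableEq α] {f : V → α}

theorem colorDegree_self (hf : IsStarColoring G f) (v : V) : G.colorDegree f v (f v) = 0 :=
  card_eq_zero.2 <| filter_eq_empty_iff.2 fun _ hw hfw =>
    hf.1 ((mem_neighborFinset _ _ _).1 hw) hfw.symm

theorem colorDegree_eq_one_or (hf : IsStarColoring G f) {u w : V} (h : G.Adj u w) :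
    G.colorDegree f u (f w) = 1 ∨ G.colorDegree f w (f u) = 1 := by
  by_contra! hne
  have hu := colorDegree_pos (f := f) h
  have hw := colorDegree_pos (f := f) h.symm
  obtain ⟨x, hx, hxu⟩ := exists_mem_ne (by omega : 1 < G.colorDegree f w (f u)) u
  obtain ⟨y, hy, hyw⟩ := exists_mem_ne (by omega : 1 < G.colorDegree f u (f w)) w
  simp only [mem_filter, mem_neighborFinset] at hx hy
  have hyx : y ≠ x := fun hyx => hf.1 h (hx.2.symm.trans (hyx ▸ hy.2))
  exact hf.2 hy.1.symm h hx.1 hyw hyx hxu.symm ⟨hy.2, hx.2.symm⟩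

theorem degree_add_card_filter_and (hf : IsStarColoring G f) (u : V) :
    G.degree u +
        #{w ∈ G.neighborFinset u | G.colorDegree f u (f w) = 1 ∧ G.colorDegree f w (f u) = 1}
      = #{w ∈ G.neighborFinset u | G.colorDegree f u (f w) = 1}
        + #{w ∈ G.neighborFinset u | G.colorDegree f w (f u) = 1} := by
  classical
  rw [← card_union_add_card_inter, ← filter_or, ← filter_and, filter_true_of_mem fun w hw =>
    hf.colorDegree_eq_one_or ((mem_neighborFinset _ _ _).1 hw), card_neighborFinset_eq_degree]

variable [Fintype α] {p : ℕ}

theorem sum_erase_colorDegree (hf : IsStarColoring G f) (v : V) :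
    ∑ c ∈ univ.erase (f v), G.colorDegree f v c = G.degree v := by
  rw [sum_erase _ (hf.colorDegree_self v), sum_colorDegree]

theorem filter_erase_colorDegree_eq_one (hf : IsStarColoring G f) (v : V) :
    {c ∈ univ.erase (f v) | G.colorDegree f v c = 1} =
      ({c | G.colorDegree f v c = 1} : Finset α) := by
  rw [filter_erase, erase_eq_of_notMem (by simp [hf.colorDegree_self v])]

theorem card_colorDegree_eq_one_le (hf : IsStarColoring G f) (hp : 1 < p)
    (hα : Fintype.card α = p + 2) {v : V} (hv : G.degree v = 2 * p) :
    #{c | G.colorDegree f v c = 1} ≤ p := by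
  have hcard : #(univ.erase (f v)) = p + 1 := by simp [hα]
  have := card_filter_eq_one_lt_card (s := univ.erase (f v)) (g := G.colorDegree f v)
    (by rw [hf.sum_erase_colorDegree, hv, hcard]; omega)
  rw [hf.filter_erase_colorDegree_eq_one, hcard] at this
  omega

theorem card_erase_filter_colorDegree_ne_one (hf : IsStarColoring G f)
    (hα : Fintype.card α = p + 2) {v : V} (hone : #{c | G.colorDegree f v c = 1} = p) :
    #{c ∈ univ.erase (f v) | G.colorDegree f v c ≠ 1} = 1 := by
  have := card_filter_add_card_filter_not (s := univ.erase (f v)) (G.colorDegree f v · = 1)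
  rw [hf.filter_erase_colorDegree_eq_one, hone] at this
  simp [hα] at this
  omega

theorem colorDegree_eq_of_ne_one (hf : IsStarColoring G f) (hα : Fintype.card α = p + 2)
    {v : V} (hv : G.degree v = 2 * p) (hone : #{c | G.colorDegree f v c = 1} = p) {c : α}
    (hc : c ≠ f v) (hd : G.colorDegree f v c ≠ 1) : G.colorDegree f v c = p := by
  have := sum_add_one_eq_card_add_of_card_filter_ne_one (mem_erase.2 ⟨hc, mem_univ _⟩) hd
    (hf.card_erase_filter_colorDegree_ne_one hα hone)
  rw [hf.sum_erase_colorDegree, hv] at this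
  simp [hα] at this
  omega

end LocallyFinite

end IsStarColoring

namespace SimpleGraph

variable {V α : Type*} [Fintype V] {G : SimpleGraph V} [DecidableRel G.Adj]

theorem sum_card_neighborFinset_filter_swap (P : V → V → Prop) [DecidableRel P] :
    ∑ u, #{w ∈ G.neighborFinset u | P u w} = ∑ u, #{w ∈ G.neighborFinset u | P w u} := by
  have := sum_card_bipartiteAbove_eq_sum_card_bipartiteBelow (s := univ) (t := univ)
    (r := fun u w => G.Adj u w ∧ P u w)
  simp only [bipartiteAbove, bipartiteBelow] at this
  simp only [neighborFinset_eq_filter, filter_filter, this, adj_comm]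

variable [DecidableEq α] {f : V → α} {p : ℕ}

theorem mul_card_filter_colorDegree_ne_one_add
    (hxor : ∀ ⦃u w⦄, G.Adj u w →
      (G.colorDegree f u (f w) = 1 ↔ G.colorDegree f w (f u) ≠ 1))
    (hheavy : ∀ v c, c ≠ f v → G.colorDegree f v c ≠ 1 → G.colorDegree f v c = p)
    {a b : α} (hab : a ≠ b) :
    p * #{u | f u = a ∧ G.colorDegree f u b ≠ 1} + #{u | f u = b ∧ G.colorDegree f u a ≠ 1}
      = #{u | f u = b} := by
  -- every `b`-neighbour of an `a`-vertex heavy towards `b` is light towards `a`, and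
  -- the only `a`-neighbour of a `b`-vertex light towards `a` is heavy towards `b`
  have hheavyNbrs : ∀ u ∈ ({u | f u = a ∧ G.colorDegree f u b ≠ 1} : Finset V),
      #(({w | f w = b ∧ G.colorDegree f w a = 1} : Finset V).bipartiteAbove G.Adj u) = p := by
    intro u hu
    obtain ⟨rfl, hub⟩ := (mem_filter.1 hu).2
    refine (congrArg card ?_).trans (hheavy u b hab.symm hub)
    ext w
    simp only [bipartiteAbove, mem_filter, mem_univ, true_and, mem_neighborFinset]
    constructor
    · rintro ⟨⟨hwb, -⟩, hadj⟩
      exact ⟨hadj, hwb⟩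
    · rintro ⟨hadj, rfl⟩
      exact ⟨⟨rfl, not_not.1 (mt (hxor hadj).2 hub)⟩, hadj⟩
  have hlightNbr : ∀ w ∈ ({w | f w = b ∧ G.colorDegree f w a = 1} : Finset V),
      #(({u | f u = a ∧ G.colorDegree f u b ≠ 1} : Finset V).bipartiteBelow G.Adj w) = 1 := by
    intro w hw
    obtain ⟨rfl, hwa⟩ := (mem_filter.1 hw).2
    refine (congrArg card ?_).trans hwa
    ext u
    simp only [bipartiteBelow, mem_filter, mem_univ, true_and, mem_neighborFinset]
    constructor
    · rintro ⟨⟨hua, -⟩, hadj⟩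
      exact ⟨hadj.symm, hua⟩
    · rintro ⟨hadj, rfl⟩
      exact ⟨⟨rfl, fun h => (hxor hadj.symm).1 h hwa⟩, hadj.symm⟩
  have hpair := card_mul_eq_card_mul G.Adj hheavyNbrs hlightNbr
  have hsplit :=
    card_filter_add_card_filter_not (s := {w | f w = b}) (G.colorDegree f · a = 1)
  simp only [filter_filter, ← ne_eq] at hsplit
  rw [mul_one] at hpair
  rw [mul_comm]
  omega

theorem sum_card_filter_colorDegree_ne_one [Fintype α]
    (hheavyUnique : ∀ v, #{c ∈ univ.erase (f v) | G.colorDegree f v c ≠ 1} = 1) (a : α) :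
    ∑ b ∈ univ.erase a, #{u | f u = a ∧ G.colorDegree f u b ≠ 1} = #{u | f u = a} := by
  have := sum_card_bipartiteAbove_eq_sum_card_bipartiteBelow (s := univ.erase a)
    (t := {u | f u = a}) (r := fun b u => G.colorDegree f u b ≠ 1)
  simp only [bipartiteAbove, bipartiteBelow, filter_filter] at this
  rw [this, card_eq_sum_ones]
  refine sum_congr rfl fun u hu => ?_
  rw [← (mem_filter.1 hu).2]
  exact hheavyUnique u

end SimpleGraph

namespace IsStarColoring

variable {V α : Type*} [Fintype V] {G : SimpleGraph V} [DecidableRel G.Adj] [Fintype α]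
  [DecidableEq α] {f : V → α} {p : ℕ}

theorem card_colorDegree_eq_one_and_iff (hf : IsStarColoring G f) (hp : 1 < p)
    (hα : Fintype.card α = p + 2) (hG : G.IsRegularOfDegree (2 * p)) :
    (∀ v, #{c | G.colorDegree f v c = 1} = p) ∧
      ∀ ⦃u w⦄, G.Adj u w →
        (G.colorDegree f u (f w) = 1 ↔ G.colorDegree f w (f u) ≠ 1) := by
  set S := fun u => #{w ∈ G.neighborFinset u | G.colorDegree f u (f w) = 1}
  set B := fun u => #{w ∈ G.neighborFinset u |
    G.colorDegree f u (f w) = 1 ∧ G.colorDegree f w (f u) = 1}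
  have hS : ∀ u, S u ≤ p := fun u =>
    (card_filter_colorDegree_eq_one_le u).trans (hf.card_colorDegree_eq_one_le hp hα (hG u))
  have hswap : ∑ u, #{w ∈ G.neighborFinset u | G.colorDegree f w (f u) = 1} = ∑ u, S u :=
    (sum_card_neighborFinset_filter_swap _).symm
  -- `∑ (deg u + B u) = 2 ∑ S u ≤ 2 n p = ∑ deg u` forces `B = 0` and `S = p`
  have hcount : ∑ u, (2 * p + B u) = ∑ u, S u + ∑ u, S u := by
    nth_rw 2 [← hswap]
    rw [← sum_add_distrib]
    exact sum_congr rfl fun u _ => hG u ▸ hf.degree_add_card_filter_and u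
  have hSsum : ∑ u, S u ≤ ∑ _u : V, p := sum_le_sum fun u _ => hS u
  rw [sum_add_distrib, sum_const, smul_eq_mul, mul_left_comm] at hcount
  rw [sum_const, smul_eq_mul] at hSsum
  have hB : ∑ u, B u = 0 := by omega
  have hSp : ∑ u, S u = ∑ _u : V, p := by rw [sum_const, smul_eq_mul]; omega
  refine ⟨fun v => ?_, fun u w h => ?_⟩
  · refine le_antisymm (hf.card_colorDegree_eq_one_le hp hα (hG v)) ?_
    rw [← (sum_eq_sum_iff_of_le fun u _ => hS u).1 hSp v (mem_univ v)]
    exact card_filter_colorDegree_eq_one_le v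
  · have hnot := filter_eq_empty_iff.1 (card_eq_zero.1 (sum_eq_zero_iff.1 hB u (mem_univ u)))
      ((mem_neighborFinset _ _ _).2 h)
    have := hf.colorDegree_eq_one_or h
    tauto

theorem mul_dvd_card (hf : IsStarColoring G f) (hp : 1 < p) (hα : Fintype.card α = p + 2)
    (hG : G.IsRegularOfDegree (2 * p)) : (p + 1) * (p + 2) ∣ Fintype.card V := by
  obtain ⟨hone, hxor⟩ := hf.card_colorDegree_eq_one_and_iff hp hα hG
  have : Nontrivial α := Fintype.one_lt_card_iff_nontrivial.1 (by omega)
  obtain ⟨a, b, hab⟩ := exists_pair_ne α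
  refine ⟨#{u | f u = a ∧ G.colorDegree f u b ≠ 1}, ?_⟩
  rw [← card_univ, card_eq_sum_card_fiberwise (f := f) (t := univ) fun _ _ => mem_univ _]
  exact (add_one_mul_add_two_mul_eq_sum hp hα _ _
    (sum_card_filter_colorDegree_ne_one fun v =>
      hf.card_erase_filter_colorDegree_ne_one hα (hone v))
    (fun c c' => mul_card_filter_colorDegree_ne_one_add hxor
      fun v _ hc hd => hf.colorDegree_eq_of_ne_one hα (hG v) (hone v) hc hd) hab).symm

end IsStarColoring

/-- If a 2p-regular graph (p ≥ 2) is (p+2)-star colourable then its number of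
vertices is divisible by (p+1)(p+2). -/
theorem stmt8 {V : Type*} [Fintype V] (G : SimpleGraph V) (p : ℕ) (hp : 2 ≤ p)
    (hreg : ∀ v : V, (G.neighborSet v).ncard = 2 * p)
    (hcol : ∃ f : V → Fin (p + 2), IsStarColoring G f) :
    (p + 1) * (p + 2) ∣ Fintype.card V := by
  classical
  obtain ⟨f, hf⟩ := hcol
  refine hf.mul_dvd_card hp (Fintype.card_fin _) fun v => ?_
  rw [← card_neighborSet_eq_degree, ← Nat.card_eq_fintype_card, Nat.card_coe_set_eq, hreg v]
end

section
/- Let p ≥ 2 and let G be a 2p-regular (p+2)-star colourable graph. Then G contains no diamond (K_4 minus an edge) as a subgraph, and in particular G is K_4-free. -/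
open Finset

namespace SimpleGraph

variable {V α : Type*} (G : SimpleGraph V) [Fintype V] [DecidableRel G.Adj] [DecidableEq α]

def colorCount (f : V → α) (v : V) (c : α) : ℕ := #{u ∈ G.neighborFinset v | f u = c}

def repeatedNeighbors (f : V → α) (v : V) : Finset V :=
  {u ∈ G.neighborFinset v | 1 < G.colorCount f v (f u)}

variable {G} {f : V → α} {u v w : V} {c : α}

@[simp]
lemma mem_repeatedNeighbors :
    u ∈ G.repeatedNeighbors f v ↔ G.Adj v u ∧ 1 < G.colorCount f v (f u) := by
  simp [repeatedNeighbors]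

lemma repeatedNeighbors_subset (f : V → α) (v : V) :
    G.repeatedNeighbors f v ⊆ G.neighborFinset v :=
  filter_subset _ _

lemma one_lt_colorCount_of_adj (hu : G.Adj v u) (hw : G.Adj v w) (hne : u ≠ w)
    (hc : f u = f w) : 1 < G.colorCount f v (f u) :=
  one_lt_card.2 ⟨u, by simpa using hu, w, by simpa [hc] using hw, hne⟩

lemma exists_adj_ne_of_one_lt_colorCount (h : 1 < G.colorCount f v c) (w : V) :
    ∃ u, G.Adj v u ∧ f u = c ∧ u ≠ w := by
  obtain ⟨u, hu, hne⟩ := exists_mem_ne h w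
  simp only [mem_filter, mem_neighborFinset] at hu
  exact ⟨u, hu.1, hu.2, hne⟩

lemma colorCount_self (hf : ∀ ⦃u w⦄, G.Adj u w → f u ≠ f w) (v : V) :
    G.colorCount f v (f v) = 0 :=
  card_eq_zero.2 <| filter_eq_empty_iff.2 fun _ hu hc =>
    hf (G.mem_neighborFinset _ _ |>.1 hu) hc.symm

/-- The neighbours whose colour is not repeated at `v` have pairwise distinct colours, avoiding
`f v` and every colour repeated at `v`. -/
lemma card_sdiff_repeatedNeighbors_add_card_lt [DecidableEq V] [Fintype α]
    (hf : ∀ ⦃u w⦄, G.Adj u w → f u ≠ f w) (v : V) (s : Finset α)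
    (hs : ∀ c ∈ s, 1 < G.colorCount f v c) :
    #(G.neighborFinset v \ G.repeatedNeighbors f v) + #s < Fintype.card α := by
  have hvs : f v ∉ s := fun h => by simpa [colorCount_self hf] using hs _ h
  have hmaps :
      ∀ u ∈ G.neighborFinset v \ G.repeatedNeighbors f v, f u ∈ (insert (f v) s)ᶜ := by
    intro u hu
    simp only [mem_sdiff, mem_neighborFinset, mem_repeatedNeighbors, not_and] at hu
    simp only [mem_compl, mem_insert, not_or]
    exact ⟨(hf hu.1).symm, fun h => hu.2 hu.1 (hs _ h)⟩
  have hinj : Set.InjOn f ↑(G.neighborFinset v \ G.repeatedNeighbors f v) := by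
    intro u hu w hw hc
    by_contra hne
    simp only [mem_coe, mem_sdiff, mem_neighborFinset, mem_repeatedNeighbors, not_and] at hu hw
    exact hu.2 hu.1 (one_lt_colorCount_of_adj hu.1 hw.1 hne hc)
  have := card_le_card_of_injOn f hmaps hinj
  rw [card_compl, card_insert_of_notMem hvs] at this
  have := card_le_univ (insert (f v) s)
  rw [card_insert_of_notMem hvs] at this
  omega

lemma sum_card_filter_neighborFinset_comm (R : V → V → Prop) [DecidableRel R] :
    ∑ v, #{u ∈ G.neighborFinset v | R v u} = ∑ v, #{u ∈ G.neighborFinset v | R u v} := by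
  simp only [neighborFinset_eq_filter, filter_filter, card_filter]
  rw [sum_comm]
  simp only [G.adj_comm]

end SimpleGraph

lemma IsStarColoring.not_one_lt_colorCount_and {V α : Type*} {G : SimpleGraph V} [Fintype V]
    [DecidableRel G.Adj] [DecidableEq α] {f : V → α} (hf : IsStarColoring G f) {u v : V}
    (huv : G.Adj u v) : ¬(1 < G.colorCount f u (f v) ∧ 1 < G.colorCount f v (f u)) := by
  rintro ⟨hu, hv⟩
  obtain ⟨v', hv', hcv, hvv'⟩ := G.exists_adj_ne_of_one_lt_colorCount hu v
  obtain ⟨u', hu', hcu, huu'⟩ := G.exists_adj_ne_of_one_lt_colorCount hv u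
  have hv'u' : v' ≠ u' := fun h => hf.1 huv (by rw [← hcu, ← h, hcv])
  exact hf.2 hv'.symm huv hu' hvv' hv'u' (Ne.symm huu') ⟨hcv, hcu.symm⟩

lemma SimpleGraph.cliqueFree_four_of_not_exists_diamond {V : Type*} {G : SimpleGraph V}
    (h : ¬ ∃ a b x y : V,
      a ≠ b ∧ G.Adj a x ∧ G.Adj a y ∧ G.Adj b x ∧ G.Adj b y ∧ G.Adj x y) :
    G.CliqueFree 4 := by
  classical
  intro s hs
  obtain ⟨a, ha⟩ := s.card_pos.1 (by rw [hs.card_eq]; norm_num)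
  obtain ⟨x, y, z, hxy, hxz, hyz, hs'⟩ := is3Clique_iff.1 (hs.erase_of_mem ha)
  have hmem : ∀ w ∈ ({x, y, z} : Finset V), w ≠ a ∧ w ∈ s := fun w hw =>
    mem_erase.1 (hs' ▸ hw)
  have hadj : ∀ w ∈ ({x, y, z} : Finset V), G.Adj a w := fun w hw =>
    hs.isClique ha (hmem w hw).2 (hmem w hw).1.symm
  exact h ⟨a, x, y, z, (hmem x (by simp)).1.symm, hadj y (by simp), hadj z (by simp),
    hxy, hxz, hyz⟩

namespace IsStarColoring

open SimpleGraph

variable {V α : Type*} {G : SimpleGraph V} [Fintype V] [DecidableRel G.Adj] [DecidableEq α]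
  {f : V → α}

lemma disjoint_repeatedNeighbors (hf : IsStarColoring G f) (v : V) :
    Disjoint (G.repeatedNeighbors f v) {u ∈ G.neighborFinset v | 1 < G.colorCount f u (f v)} :=
  disjoint_left.2 fun u hu hu' => by
    rw [mem_repeatedNeighbors] at hu
    exact hf.not_one_lt_colorCount_and hu.1 ⟨hu.2, (mem_filter.1 hu').2⟩

variable [Fintype α] {p : ℕ}

lemma le_card_repeatedNeighbors (hf : IsStarColoring G f) (hp : 2 ≤ p)
    (hdeg : ∀ v, G.degree v = 2 * p) (hα : Fintype.card α = p + 2) (v : V) :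
    p ≤ #(G.repeatedNeighbors f v) := by
  classical
  have hsplit := card_sdiff_add_card_eq_card (G.repeatedNeighbors_subset f v)
  rw [card_neighborFinset_eq_degree, hdeg] at hsplit
  obtain ⟨u, hu⟩ : (G.repeatedNeighbors f v).Nonempty := by
    have := card_sdiff_repeatedNeighbors_add_card_lt hf.1 v ∅ (by simp)
    rw [card_empty, hα] at this
    rw [← card_pos]
    omega
  have := card_sdiff_repeatedNeighbors_add_card_lt hf.1 v {f u}
    (by simpa using (mem_repeatedNeighbors.1 hu).2)
  rw [card_singleton, hα] at this
  omega

lemma card_repeatedNeighbors_eq (hf : IsStarColoring G f) (hp : 2 ≤ p)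
    (hdeg : ∀ v, G.degree v = 2 * p) (hα : Fintype.card α = p + 2) (v : V) :
    #(G.repeatedNeighbors f v) = p ∧
      #{u ∈ G.neighborFinset v | 1 < G.colorCount f u (f v)} = p := by
  classical
  have hle := hf.le_card_repeatedNeighbors hp hdeg hα
  have hadd (v : V) : #(G.repeatedNeighbors f v) +
      #{u ∈ G.neighborFinset v | 1 < G.colorCount f u (f v)} ≤ 2 * p := by
    rw [← hdeg v, ← card_neighborFinset_eq_degree,
      ← card_union_of_disjoint (hf.disjoint_repeatedNeighbors v)]
    exact card_le_card (union_subset (G.repeatedNeighbors_subset f v) (filter_subset _ _))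
  -- both sides count the ordered pairs `(v, u)` of adjacent vertices with `f u` repeated at `v`
  have hsum : ∑ v, #(G.repeatedNeighbors f v) =
      ∑ v, #{u ∈ G.neighborFinset v | 1 < G.colorCount f u (f v)} :=
    G.sum_card_filter_neighborFinset_comm fun v u => 1 < G.colorCount f v (f u)
  have heq := (sum_eq_sum_iff_of_le fun v _ => by have := hadd v; have := hle v; omega).1
    hsum.symm v (mem_univ v)
  have := hadd v
  have := hle v
  omega

lemma eq_of_one_lt_colorCount (hf : IsStarColoring G f) (hp : 2 ≤ p)
    (hdeg : ∀ v, G.degree v = 2 * p) (hα : Fintype.card α = p + 2) {v : V} {c c' : α}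
    (hc : 1 < G.colorCount f v c) (hc' : 1 < G.colorCount f v c') : c = c' := by
  classical
  by_contra hne
  have := card_sdiff_repeatedNeighbors_add_card_lt hf.1 v {c, c'} (by simp [hc, hc'])
  rw [card_pair hne, hα, card_sdiff_of_subset (G.repeatedNeighbors_subset f v),
    card_neighborFinset_eq_degree, hdeg, (hf.card_repeatedNeighbors_eq hp hdeg hα v).1] at this
  omega

lemma one_lt_colorCount_or (hf : IsStarColoring G f) (hp : 2 ≤ p)
    (hdeg : ∀ v, G.degree v = 2 * p) (hα : Fintype.card α = p + 2) {u v : V} (huv : G.Adj u v) :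
    1 < G.colorCount f u (f v) ∨ 1 < G.colorCount f v (f u) := by
  classical
  obtain ⟨h₁, h₂⟩ := hf.card_repeatedNeighbors_eq hp hdeg hα u
  have hunion : G.repeatedNeighbors f u ∪
      {w ∈ G.neighborFinset u | 1 < G.colorCount f w (f u)} = G.neighborFinset u := by
    refine eq_of_subset_of_card_le
      (union_subset (G.repeatedNeighbors_subset f u) (filter_subset _ _)) ?_
    rw [card_union_of_disjoint (hf.disjoint_repeatedNeighbors u), h₁, h₂,
      card_neighborFinset_eq_degree, hdeg]
    omega
  have hv : v ∈ G.neighborFinset u := (mem_neighborFinset _ _ _).2 huv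
  rw [← hunion, mem_union, mem_repeatedNeighbors, mem_filter] at hv
  exact hv.imp And.right And.right

lemma not_exists_diamond (hf : IsStarColoring G f) (hp : 2 ≤ p)
    (hdeg : ∀ v, G.degree v = 2 * p) (hα : Fintype.card α = p + 2) :
    ¬ ∃ a b x y : V,
      a ≠ b ∧ G.Adj a x ∧ G.Adj a y ∧ G.Adj b x ∧ G.Adj b y ∧ G.Adj x y := by
  have huniq {v : V} {c c' : α} :
      1 < G.colorCount f v c → 1 < G.colorCount f v c' → c = c' :=
    hf.eq_of_one_lt_colorCount hp hdeg hα
  have hor {u v : V} :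
      G.Adj u v → 1 < G.colorCount f u (f v) ∨ 1 < G.colorCount f v (f u) :=
    hf.one_lt_colorCount_or hp hdeg hα
  suffices key : ∀ a b x y : V, a ≠ b → G.Adj a x → G.Adj a y → G.Adj b x → G.Adj b y →
      G.Adj x y → 1 < G.colorCount f x (f y) → False by
    rintro ⟨a, b, x, y, hab, hax, hay, hbx, hby, hxy⟩
    rcases hor hxy with h | h
    · exact key a b x y hab hax hay hbx hby hxy h
    · exact key a b y x hab hay hax hby hbx hxy.symm h
  intro a b x y hab hax hay hbx hby hxy hx
  have hz : ∀ z, G.Adj z x → G.Adj z y → 1 < G.colorCount f y (f z) := by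
    intro z hzx hzy
    have hzx' : 1 < G.colorCount f z (f x) :=
      (hor hzx).resolve_right fun h => hf.1 hzy (huniq h hx)
    exact (hor hzy).resolve_left fun h => hf.1 hxy (huniq hzx' h)
  have hab' : f a = f b := huniq (hz a hax hay) (hz b hbx hby)
  exact hf.1 hay (huniq (one_lt_colorCount_of_adj hax.symm hbx.symm hab hab') hx)

end IsStarColoring

/-- A 2p-regular (p+2)-star colourable graph (p ≥ 2) contains no diamond
as a subgraph; in particular it is K₄-free. -/
theorem stmt10 {V : Type*} [Fintype V] (G : SimpleGraph V) (p : ℕ) (hp : 2 ≤ p)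
    (hreg : ∀ v : V, (G.neighborSet v).ncard = 2 * p)
    (hcol : ∃ f : V → Fin (p + 2), IsStarColoring G f) :
    (¬ ∃ a b x y : V, a ≠ b ∧ G.Adj a x ∧ G.Adj a y ∧ G.Adj b x ∧ G.Adj b y ∧
      G.Adj x y) ∧ G.CliqueFree 4 := by
  classical
  obtain ⟨f, hf⟩ := hcol
  have hdeg (v : V) : G.degree v = 2 * p := by
    rw [← hreg v, ← G.card_neighborFinset_eq_degree, SimpleGraph.neighborFinset,
      Set.ncard_eq_toFinset_card']
  have hdiamond := hf.not_exists_diamond hp hdeg (Fintype.card_fin _)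
  exact ⟨hdiamond, G.cliqueFree_four_of_not_exists_diamond hdiamond⟩
end
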